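/- Let A be a finite dimensional algebra over a field K, M a finite dimensional A-bimodule, and Λ = A ⋉ M the trivial extension. For any finite dimensional A-module N, the number of pairwise non-isomorphic indecomposable direct summands of T(N) equals that of N. In particular, Λ and A have the same number of non-isomorphic indecomposable projective modules. -/

import Mathlib

open MulOpposite

/-- `(MN, t)` is the tensor product `M ⊗_R N` of the `R`-bimodule `M` and the left
`R`-module `N`: `t` is bi-additive, `R`-balanced, left-`R`-linear, and universal
among bi-additive `R`-balanced maps out of `M × N`. -/
def IsTensorProd (R : Type) [Ring R] (M : Type) [AddCommGroup M] [Module R M]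
    [Module Rᵐᵒᵖ M] (N : Type) [AddCommGroup N] [Module R N]
    (MN : Type) [AddCommGroup MN] [Module R MN] (t : M → N → MN) : Prop :=
  (∀ m m' n, t (m + m') n = t m n + t m' n) ∧
  (∀ m n n', t m (n + n') = t m n + t m n') ∧
  (∀ (r : R) (m : M) (n : N), t (op r • m) n = t m (r • n)) ∧
  (∀ (r : R) (m : M) (n : N), t (r • m) n = r • t m n) ∧
  (∀ (P : Type) [AddCommGroup P] (g : M → N → P),
    (∀ m m' n, g (m + m') n = g m n + g m' n) →
    (∀ m n n', g m (n + n') = g m n + g m n') →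
    (∀ (r : R) m n, g (op r • m) n = g m (r • n)) →
    ∃! h : MN →+ P, ∀ m n, h (t m n) = g m n)

/-- The number of pairwise non-isomorphic indecomposable direct summands of a module:
the cardinality of the set of isomorphism classes of submodules that are direct
summands and are indecomposable. -/
noncomputable def numIndecSummands (A : Type) [Ring A] (N : Type) [AddCommGroup N]
    (i : Module A N) : ℕ := by
  letI := i
  exact Nat.card (Quot (fun (P Q : {P : Submodule A N //
      (∃ P' : Submodule A N, IsCompl P P') ∧ P ≠ ⊥ ∧
      ∀ p q : Submodule A ↥P, IsCompl p q → p = ⊥ ∨ q = ⊥}) =>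
    Nonempty (↥P.1 ≃ₗ[A] ↥Q.1)))

open TrivSqZeroExt

/-! Both counts are counts of classes of primitive idempotents in endomorphism rings, under
`e ~ f ⟺ e = b a, f = a b`. Reading off the first component of `E (n, 0)` (the functor `C`) is a
ring retraction `End_Λ (T N) → End_A N` with section `T`, and its kernel, the endomorphisms
`(n, x) ↦ (0, c n)`, squares to zero. In such a split square-zero extension every idempotent is
conjugate to the lift of its image, so primitive idempotents correspond class by class.
For the second count, `Λ = T(A)` since `M ⊗_A A = M`. -/

theorem Nat.card_quot_congr {α β : Type*} {r : α → α → Prop} {s : β → β → Prop}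
    (f : α → β) (g : β → α) (hf : ∀ ⦃a a'⦄, r a a' → s (f a) (f a'))
    (hg : ∀ ⦃b b'⦄, s b b' → r (g b) (g b')) (hgf : ∀ a, r (g (f a)) a)
    (hfg : ∀ b, s (f (g b)) b) : Nat.card (Quot r) = Nat.card (Quot s) :=
  Nat.card_congr
    { toFun := Quot.map f hf
      invFun := Quot.map g hg
      left_inv := Quot.ind fun a => Quot.sound (hgf a)
      right_inv := Quot.ind fun b => Quot.sound (hfg b) }

section Idempotents

variable {R S : Type*} [Ring R] [Ring S]

structure IsPrimitiveIdempotent (e : S) : Prop where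
  isIdempotentElem : IsIdempotentElem e
  ne_zero : e ≠ 0
  eq_zero_or_eq : ∀ g : S, IsIdempotentElem g → g * e = g → e * g = g → g = 0 ∨ g = e

def IdempotentEquiv (e f : S) : Prop := ∃ a b : S, b * a = e ∧ a * b = f

variable (S) in
def PrimitiveIdempotentClasses : Type _ :=
  Quot fun e f : {e : S // IsPrimitiveIdempotent e} => IdempotentEquiv e.1 f.1

theorem IdempotentEquiv.refl {e : S} (he : IsIdempotentElem e) : IdempotentEquiv e e :=
  ⟨e, e, he, he⟩

theorem IdempotentEquiv.symm {e f : S} : IdempotentEquiv e f → IdempotentEquiv f e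
  | ⟨a, b, hba, hab⟩ => ⟨b, a, hab, hba⟩

theorem IdempotentEquiv.map {F : Type*} [FunLike F S R] [RingHomClass F S R] (φ : F) {e f : S} :
    IdempotentEquiv e f → IdempotentEquiv (φ e) (φ f)
  | ⟨a, b, hba, hab⟩ => ⟨φ a, φ b, by rw [← map_mul, hba], by rw [← map_mul, hab]⟩

-- `u = 1 + (2e - 1)(E - e)` is a unit with `u E = e u`,
-- so `E = (E u⁻¹) (u E)` and `e = (u E) (E u⁻¹)`.
theorem idempotentEquiv_of_mul_self_sub_eq_zero {e E : S} (he : IsIdempotentElem e)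
    (hE : IsIdempotentElem E) (hn : (E - e) * (E - e) = 0) : IdempotentEquiv E e := by
  obtain ⟨n, rfl⟩ : ∃ n, E = e + n := ⟨E - e, by abel⟩
  rw [add_sub_cancel_left] at hn
  have hsum : e * n + n * e = n := by
    have h := hE.eq
    rw [show (e + n) * (e + n) = e * e + (e * n + n * e) + n * n by noncomm_ring, he.eq, hn,
      add_zero] at h
    exact add_left_cancel h
  have hene : e * n * e = 0 := by
    have h := congrArg (e * ·) hsum
    simp only [mul_add, ← mul_assoc, he.eq] at h
    simpa using h
  have hnen : n * e * n = 0 := by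
    have h := congrArg (n * ·) hsum
    simp only [mul_add, ← mul_assoc, hn, zero_mul] at h
    simpa [mul_assoc] using h
  set w := (2 * e - 1) * n
  have hw : w * w = 0 := by
    have : w * w = 4 * (e * (n * e * n)) - 2 * (e * (n * n)) - 2 * (n * e * n) + n * n := by
      simp only [w]; noncomm_ring
    rw [this, hnen, hn]; simp
  have hu : (1 + w) * (e + n) = e * (1 + w) := by
    have : (1 + w) * (e + n) - e * (1 + w) =
        (n - (e * n + n * e)) + 2 * (e * n * e) + 2 * (e * (n * n)) - n * n
          - 2 * ((e * e - e) * n) := by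
      simp only [w]; noncomm_ring
    rw [← sub_eq_zero, this, hsum, hene, hn, he.eq]; simp
  have hvu : (1 - w) * (1 + w) = 1 := by noncomm_ring; rw [hw]; simp
  have huv : (1 + w) * (1 - w) = 1 := by noncomm_ring; rw [hw]; simp
  refine ⟨(1 + w) * (e + n), (e + n) * (1 - w), ?_, ?_⟩
  · rw [mul_assoc, ← mul_assoc (1 - w), hvu, one_mul, hE.eq]
  · calc (1 + w) * (e + n) * ((e + n) * (1 - w))
        _ = (1 + w) * ((e + n) * (e + n)) * (1 - w) := by simp only [mul_assoc]
        _ = e * ((1 + w) * (1 - w)) := by rw [hE.eq, hu, mul_assoc]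
        _ = e := by rw [huv, mul_one]

theorem IsPrimitiveIdempotent.of_idempotentEquiv {e f : S} (he : IsPrimitiveIdempotent e)
    (hf : IsIdempotentElem f) (hef : IdempotentEquiv e f) : IsPrimitiveIdempotent f := by
  obtain ⟨a, b, rfl, rfl⟩ := hef
  refine ⟨hf, fun hf0 => he.ne_zero ?_, fun g hg hgf hfg => ?_⟩
  · calc b * a = b * a * (b * a) := he.isIdempotentElem.eq.symm
      _ = b * (a * b) * a := by simp only [mul_assoc]
      _ = 0 := by rw [hf0, mul_zero, zero_mul]
  have hg_eq : g = a * (b * g * a) * b := by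
    calc g = a * b * g * (a * b) := by rw [mul_assoc, hgf, hfg]
      _ = _ := by simp only [mul_assoc]
  have hidem : IsIdempotentElem (b * g * a) := by
    calc b * g * a * (b * g * a) = b * (g * (a * b) * g) * a := by simp only [mul_assoc]
      _ = b * g * a := by rw [hgf, hg.eq, mul_assoc]
  have hright : b * g * a * (b * a) = b * g * a := by
    calc b * g * a * (b * a) = b * (g * (a * b)) * a := by simp only [mul_assoc]
      _ = b * g * a := by rw [hgf, mul_assoc]
  have hleft : b * a * (b * g * a) = b * g * a := by
    calc b * a * (b * g * a) = b * (a * b * g) * a := by simp only [mul_assoc]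
      _ = b * g * a := by rw [hfg, mul_assoc]
  rcases he.eq_zero_or_eq _ hidem hright hleft with h | h
  · exact Or.inl (by rw [hg_eq, h, mul_zero, zero_mul])
  · exact Or.inr (by rw [hg_eq, h, ← mul_assoc, mul_assoc (a * b), hf.eq])

theorem IsPrimitiveIdempotent.of_map {F : Type*} [FunLike F R S] [RingHomClass F R S] {σ : F}
    (hσ : Function.Injective σ) {e : R} (he : IsPrimitiveIdempotent (σ e)) :
    IsPrimitiveIdempotent e where
  isIdempotentElem := hσ (by rw [map_mul, he.isIdempotentElem.eq])
  ne_zero h := he.ne_zero (by rw [h, map_zero])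
  eq_zero_or_eq g hg hge heg := by
    refine (he.eq_zero_or_eq (σ g) (hg.map σ) ?_ ?_).imp (fun h => hσ ?_) (fun h => hσ h)
    · rw [← map_mul, hge]
    · rw [← map_mul, heg]
    · rw [h, map_zero]

section SplitSquareZeroExtension

variable {π : S →+* R} {σ : R →+* S} (hπσ : Function.LeftInverse π σ)
  (hker : ∀ x y, π x = 0 → π y = 0 → x * y = 0)
include hker

theorem IsIdempotentElem.eq_zero_of_map_eq_zero {x : S} (hx : IsIdempotentElem x)
    (h : π x = 0) : x = 0 := by
  rw [← hx.eq]; exact hker x x h h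

include hπσ

theorem IsPrimitiveIdempotent.map_section {e : R} (he : IsPrimitiveIdempotent e) :
    IsPrimitiveIdempotent (σ e) := by
  refine ⟨he.isIdempotentElem.map σ, fun h => he.ne_zero ?_, fun G hG hGe heG => ?_⟩
  · rw [← hπσ e, h, map_zero]
  rcases he.eq_zero_or_eq (π G) (hG.map π) (by rw [← hπσ e, ← map_mul, hGe])
      (by rw [← hπσ e, ← map_mul, heG]) with h | h
  · exact Or.inl (hG.eq_zero_of_map_eq_zero hker h)
  · -- `σ e - G` is an idempotent in the kernel of `π`
    refine Or.inr (sub_eq_zero.1 (IsIdempotentElem.eq_zero_of_map_eq_zero hker ?_ ?_)).symm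
    · simp only [IsIdempotentElem, sub_mul, mul_sub, hGe, heG, hG.eq,
        (he.isIdempotentElem.map σ).eq, sub_self, sub_zero]
    · rw [map_sub, hπσ, h, sub_self]

theorem IsIdempotentElem.idempotentEquiv_section_map {E : S} (hE : IsIdempotentElem E) :
    IdempotentEquiv E (σ (π E)) :=
  idempotentEquiv_of_mul_self_sub_eq_zero ((hE.map π).map σ) hE
    (hker _ _ (by rw [map_sub, hπσ]; exact sub_self _) (by rw [map_sub, hπσ]; exact sub_self _))

theorem IsPrimitiveIdempotent.map_retraction {E : S} (hE : IsPrimitiveIdempotent E) :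
    IsPrimitiveIdempotent (π E) :=
  IsPrimitiveIdempotent.of_map hπσ.injective <|
    hE.of_idempotentEquiv ((hE.isIdempotentElem.map π).map σ)
      (hE.isIdempotentElem.idempotentEquiv_section_map hπσ hker)

theorem card_primitiveIdempotentClasses_eq_of_leftInverse :
    Nat.card (PrimitiveIdempotentClasses S) = Nat.card (PrimitiveIdempotentClasses R) :=
  Nat.card_quot_congr (fun E => ⟨π E.1, E.2.map_retraction hπσ hker⟩)
    (fun e => ⟨σ e.1, e.2.map_section hπσ hker⟩)
    (fun _ _ h => h.map π) (fun _ _ h => h.map σ)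
    (fun E => (E.2.isIdempotentElem.idempotentEquiv_section_map hπσ hker).symm)
    (fun e => by simpa only [hπσ e.1] using IdempotentEquiv.refl e.2.isIdempotentElem)

end SplitSquareZeroExtension

end Idempotents

section Summands

open LinearMap

variable {R X : Type*} [Ring R] [AddCommGroup X] [Module R X]

def IsIndecomposableSummand (P : Submodule R X) : Prop :=
  (∃ P' : Submodule R X, IsCompl P P') ∧ P ≠ ⊥ ∧
    ∀ p q : Submodule R P, IsCompl p q → p = ⊥ ∨ q = ⊥

theorem IdempotentEquiv.nonempty_linearEquiv_range {e f : Module.End R X}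
    (he : IsIdempotentElem e) (hf : IsIdempotentElem f) (hef : IdempotentEquiv e f) :
    Nonempty (range e ≃ₗ[R] range f) := by
  obtain ⟨a, b, rfl, rfl⟩ := hef
  have ha : ∀ x ∈ range (b * a), a x ∈ range (a * b) := by
    rintro _ ⟨y, rfl⟩; exact ⟨a y, rfl⟩
  have hb : ∀ x ∈ range (a * b), b x ∈ range (b * a) := by
    rintro _ ⟨y, rfl⟩; exact ⟨b y, rfl⟩
  refine ⟨.ofLinearMap (a.restrict ha) (b.restrict hb) ?_ ?_⟩
  · ext ⟨x, hx⟩; exact (IsIdempotentElem.mem_range_iff hf).1 hx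
  · ext ⟨x, hx⟩; exact (IsIdempotentElem.mem_range_iff he).1 hx

theorem idempotentEquiv_of_linearEquiv_range {e f : Module.End R X}
    (he : IsIdempotentElem e) (hf : IsIdempotentElem f) (φ : range e ≃ₗ[R] range f) :
    IdempotentEquiv e f := by
  have hfix : ∀ {g : Module.End R X}, IsIdempotentElem g → ∀ y : range g,
      g.rangeRestrict (y : X) = y := fun hg y =>
    Subtype.ext ((IsIdempotentElem.mem_range_iff hg).1 y.2)
  refine ⟨(range f).subtype ∘ₗ φ.toLinearMap ∘ₗ e.rangeRestrict,
    (range e).subtype ∘ₗ φ.symm.toLinearMap ∘ₗ f.rangeRestrict, ?_, ?_⟩ <;> ext x <;>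
    simp [hfix he, hfix hf]

theorem IsPrimitiveIdempotent.isIndecomposableSummand_range {e : Module.End R X}
    (he : IsPrimitiveIdempotent e) : IsIndecomposableSummand (range e) := by
  have he_fix : ∀ y : range e, e y = y := fun y =>
    (IsIdempotentElem.mem_range_iff he.isIdempotentElem).1 y.2
  have hfix : ∀ y : range e, e.rangeRestrict (y : X) = y := fun y => Subtype.ext (he_fix y)
  refine ⟨⟨_, IsIdempotentElem.isCompl he.isIdempotentElem⟩,
    fun h => he.ne_zero (range_eq_bot.1 h), fun p q hpq => ?_⟩
  set g := (range e).subtype ∘ₗ p.projection q hpq ∘ₗ e.rangeRestrict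
  have hg_apply : ∀ y : range e, g y = p.projection q hpq y := fun y => by simp [g, hfix]
  have hg : IsIdempotentElem g := by
    ext x; simp [g, hfix]
  have hge : g * e = g := by
    have hrr : ∀ x, e.rangeRestrict (e x) = e.rangeRestrict x := fun x => hfix (e.rangeRestrict x)
    ext x; simp [g, hrr]
  have heg : e * g = g := by
    ext x; exact he_fix (p.projection q hpq (e.rangeRestrict x))
  rcases he.eq_zero_or_eq g hg hge heg with h | h
  · refine Or.inl (eq_bot_iff.2 fun y hy => ?_)
    have := hg_apply y
    rw [h, Submodule.projection_apply_left hpq ⟨y, hy⟩] at this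
    simpa using this.symm
  · refine Or.inr (eq_bot_iff.2 fun y hy => ?_)
    have := hg_apply y
    rw [h, Submodule.projection_apply_of_mem_right hpq hy, he_fix] at this
    simpa using this

theorem IsPrimitiveIdempotent.of_isIndecomposableSummand_range {e : Module.End R X}
    (he : IsIdempotentElem e) (hP : IsIndecomposableSummand (range e)) :
    IsPrimitiveIdempotent e := by
  refine ⟨he, fun h => hP.2.1 (range_eq_bot.2 h), fun g hg hge heg => ?_⟩
  set h := g.restrict (p := range e) (q := range e)
    fun x _ => ⟨g x, by rw [← Module.End.mul_apply, heg]⟩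
  have hh : IsIdempotentElem h := by ext y; exact congrArg (· y) hg.eq
  have hg_apply : ∀ x, g x = h (e.rangeRestrict x) := fun x => by rw [← hge]; rfl
  rcases hP.2.2 _ _ (IsIdempotentElem.isCompl hh) with hr | hk
  · left; ext x; rw [hg_apply, range_eq_bot.1 hr]; rfl
  · have hid : ∀ y, h y = y := fun y => ker_eq_bot.1 hk (congrArg (· y) hh.eq)
    right; ext x; rw [hg_apply, hid]; rfl

theorem IsIndecomposableSummand.isPrimitiveIdempotent_projection {P P' : Submodule R X}
    (hP : IsIndecomposableSummand P) (h : IsCompl P P') :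
    IsPrimitiveIdempotent (P.projection P' h) :=
  .of_isIndecomposableSummand_range (Submodule.isIdempotentElem_projection h)
    (by rwa [Submodule.range_projection])

theorem numIndecSummands_eq_card_primitiveIdempotentClasses (R X : Type) [Ring R]
    [AddCommGroup X] [Module R X] :
    numIndecSummands R X inferInstance =
      Nat.card (PrimitiveIdempotentClasses (Module.End R X)) := by
  have hrange (P : {P : Submodule R X // IsIndecomposableSummand P}) :=
    Submodule.range_projection P.2.1.choose_spec
  have hidem (P : {P : Submodule R X // IsIndecomposableSummand P}) :=
    Submodule.isIdempotentElem_projection P.2.1.choose_spec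
  refine (Nat.card_quot_congr (α := {e : Module.End R X // IsPrimitiveIdempotent e})
    (β := {P : Submodule R X // IsIndecomposableSummand P})
    (fun e => ⟨range e.1, e.2.isIndecomposableSummand_range⟩)
    (fun P => ⟨_, P.2.isPrimitiveIdempotent_projection P.2.1.choose_spec⟩)
    (fun e f hef => hef.nonempty_linearEquiv_range e.2.isIdempotentElem f.2.isIdempotentElem)
    (fun P Q ⟨φ⟩ => idempotentEquiv_of_linearEquiv_range (hidem P) (hidem Q)
      ((LinearEquiv.ofEq _ _ (hrange P)).trans (φ.trans (LinearEquiv.ofEq _ _ (hrange Q)).symm)))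
    (fun e => idempotentEquiv_of_linearEquiv_range (hidem _) e.2.isIdempotentElem
      (LinearEquiv.ofEq _ _ (hrange _)))
    (fun P => ⟨LinearEquiv.ofEq _ _ (hrange P)⟩)).symm

end Summands

namespace IsTensorProd

section Tensor

variable {A M N MN : Type} [Ring A] [AddCommGroup M] [Module A M] [Module Aᵐᵒᵖ M]
  [AddCommGroup N] [Module A N] [AddCommGroup MN] [Module A MN] {t : M → N → MN}
  (ht : IsTensorProd A M N MN t)
include ht

theorem zero_left (n : N) : t 0 n = 0 :=
  (AddMonoidHom.mk' (t · n) fun m m' => ht.1 m m' n).map_zero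

theorem zero_right (m : M) : t m 0 = 0 :=
  (AddMonoidHom.mk' (t m) fun n n' => ht.2.1 m n n').map_zero

theorem addMonoidHom_ext {P : Type} [AddCommGroup P] {φ ψ : MN →+ P}
    (h : ∀ m n, φ (t m n) = ψ (t m n)) : φ = ψ := by
  obtain ⟨χ, -, hχ⟩ := ht.2.2.2.2 P (fun m n => ψ (t m n))
    (fun m m' n => by rw [ht.1, map_add]) (fun m n n' => by rw [ht.2.1, map_add])
    (fun r m n => by rw [ht.2.2.1])
  exact (hχ φ h).trans (hχ ψ fun _ _ => rfl).symm

theorem end_ext {φ ψ : Module.End A MN} (h : ∀ m n, φ (t m n) = ψ (t m n)) : φ = ψ :=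
  LinearMap.toAddMonoidHom_injective (ht.addMonoidHom_ext h)

theorem exists_map (g : Module.End A N) :
    ∃ h : Module.End A MN, ∀ m n, h (t m n) = t m (g n) := by
  obtain ⟨h, hh, -⟩ := ht.2.2.2.2 MN (fun m n => t m (g n)) (fun m m' n => ht.1 m m' (g n))
    (fun m n n' => by rw [map_add, ht.2.1]) (fun r m n => by rw [map_smul, ht.2.2.1])
  refine ⟨{ h with map_smul' := fun r x => ?_ }, hh⟩
  have := ht.addMonoidHom_ext (φ := h.comp (DistribSMul.toAddMonoidHom MN r))
    (ψ := (DistribSMul.toAddMonoidHom MN r).comp h) fun m n => by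
      simp [← ht.2.2.2.1, hh]
  exact DFunLike.congr_fun this x

noncomputable def map : Module.End A N →+* Module.End A MN where
  toFun g := (ht.exists_map g).choose
  map_one' := ht.end_ext fun m n => (ht.exists_map _).choose_spec m n
  map_mul' g g' := ht.end_ext fun m n => ((ht.exists_map _).choose_spec m n).trans <| by
    simp [(ht.exists_map g).choose_spec, (ht.exists_map g').choose_spec]
  map_zero' := ht.end_ext fun m n => ((ht.exists_map _).choose_spec m n).trans <| by
    simp [ht.zero_right]
  map_add' g g' := ht.end_ext fun m n => ((ht.exists_map _).choose_spec m n).trans <| by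
    simp [(ht.exists_map g).choose_spec, (ht.exists_map g').choose_spec, ht.2.1]

theorem map_apply_tmul (g : Module.End A N) (m : M) (n : N) : ht.map g (t m n) = t m (g n) :=
  (ht.exists_map g).choose_spec m n

end Tensor

section TrivSqZeroExtModule

variable {A M N MN : Type} [Ring A] [AddCommGroup M] [Module A M] [Module Aᵐᵒᵖ M]
  [SMulCommClass A Aᵐᵒᵖ M] [AddCommGroup N] [Module A N] [AddCommGroup MN] [Module A MN]
  {t : M → N → MN} [Module (TrivSqZeroExt A M) (N × MN)]
  (ht : IsTensorProd A M N MN t)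
  (hTN : ∀ (q : TrivSqZeroExt A M) (x : N × MN),
    q • x = (q.fst • x.1, q.fst • x.2 + t q.snd x.1))

include hTN

theorem apply_zero_tmul (E : Module.End (TrivSqZeroExt A M) (N × MN)) (m : M) (n : N) :
    E (0, t m n) = (0, t m (E (n, 0)).1) := by
  have hinr (x : N × MN) : (inr m : TrivSqZeroExt A M) • x = (0, t m x.1) := by simp [hTN]
  rw [← hinr (n, 0), map_smul, hinr]

include ht

theorem inl_smul (a : A) (x : N × MN) :
    (inl a : TrivSqZeroExt A M) • x = (a • x.1, a • x.2) := by
  simp [hTN, ht.zero_left]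

theorem fst_apply (E : Module.End (TrivSqZeroExt A M) (N × MN)) (x : N × MN) :
    (E x).1 = (E (x.1, 0)).1 := by
  have hzero : ∀ y, (E (0, y)).1 = 0 := DFunLike.congr_fun <| ht.addMonoidHom_ext
    (φ := (AddMonoidHom.fst N MN).comp (E.toAddMonoidHom.comp (AddMonoidHom.inr N MN)))
    (ψ := 0) fun m n => by simp [apply_zero_tmul hTN]
  obtain ⟨n, y⟩ := x
  show (E (n, y)).1 = (E (n, 0)).1
  rw [show ((n, y) : N × MN) = (n, 0) + (0, y) by simp, map_add, Prod.fst_add, hzero, add_zero]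

/-- The functor `C = coker` of the paper, on endomorphisms of `T(N)`. -/
noncomputable def endC : Module.End (TrivSqZeroExt A M) (N × MN) →+* Module.End A N where
  toFun E :=
    { toFun n := (E (n, 0)).1
      map_add' n n' := by rw [← Prod.fst_add, ← map_add, Prod.mk_add_mk, add_zero]
      map_smul' a n := by
        have hinl : ((a • n, 0) : N × MN) = (inl a : TrivSqZeroExt A M) • (n, 0) := by
          rw [ht.inl_smul hTN, smul_zero]
        rw [RingHom.id_apply, hinl, map_smul, ht.inl_smul hTN] }
  map_one' := rfl
  map_mul' E F := LinearMap.ext fun n => ht.fst_apply hTN E _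
  map_zero' := rfl
  map_add' E F := rfl

/-- The functor `T` of the paper, on endomorphisms of `N`. -/
noncomputable def endT : Module.End A N →+* Module.End (TrivSqZeroExt A M) (N × MN) where
  toFun g :=
    { toFun x := (g x.1, ht.map g x.2)
      map_add' x y := by simp
      map_smul' q x := by simp [hTN, ht.map_apply_tmul] }
  map_one' := by ext <;> simp
  map_mul' g g' := by ext <;> simp
  map_zero' := by ext <;> simp
  map_add' g g' := by ext <;> simp

theorem leftInverse_endC_endT : Function.LeftInverse (ht.endC hTN) (ht.endT hTN) := fun _ => rfl

theorem mul_eq_zero_of_endC_eq_zero {E F : Module.End (TrivSqZeroExt A M) (N × MN)}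
    (hE : ht.endC hTN E = 0) (hF : ht.endC hTN F = 0) : E * F = 0 := by
  have hE0 : ∀ y, E (0, y) = 0 := DFunLike.congr_fun <| ht.addMonoidHom_ext
    (φ := E.toAddMonoidHom.comp (AddMonoidHom.inr N MN)) (ψ := 0) fun m n => by
      have : (E (n, 0)).1 = 0 := DFunLike.congr_fun hE n
      simp [apply_zero_tmul hTN, this, ht.zero_right]
  refine LinearMap.ext fun x => ?_
  have hFx : F x = (0, (F x).2) :=
    Prod.ext ((ht.fst_apply hTN F x).trans (DFunLike.congr_fun hF x.1)) rfl
  rw [Module.End.mul_apply, hFx, hE0, LinearMap.zero_apply]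

theorem numIndecSummands_eq :
    numIndecSummands (TrivSqZeroExt A M) (N × MN) inferInstance =
      numIndecSummands A N inferInstance := by
  rw [numIndecSummands_eq_card_primitiveIdempotentClasses,
    numIndecSummands_eq_card_primitiveIdempotentClasses]
  exact card_primitiveIdempotentClasses_eq_of_leftInverse (ht.leftInverse_endC_endT hTN)
    fun _ _ => ht.mul_eq_zero_of_endC_eq_zero hTN

end TrivSqZeroExtModule

end IsTensorProd

theorem isTensorProd_op_smul (A M : Type) [Ring A] [AddCommGroup M] [Module A M]
    [Module Aᵐᵒᵖ M] [SMulCommClass A Aᵐᵒᵖ M] :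
    IsTensorProd A M A M fun m a => op a • m := by
  refine ⟨fun _ _ _ => smul_add _ _ _, fun _ _ _ => by simp [add_smul],
    fun _ _ _ => by simp [mul_smul], fun _ _ _ => (smul_comm _ _ _).symm,
    fun P _ g hadd _ hbal => ⟨AddMonoidHom.mk' (g · 1) fun m m' => hadd m m' 1, fun m a => ?_,
      fun h hh => AddMonoidHom.ext fun m => ?_⟩⟩
  · simp [hbal]
  · simpa using hh m 1

theorem numIndecSummands_trivSqZeroExt (A M : Type) [Ring A] [AddCommGroup M] [Module A M]
    [Module Aᵐᵒᵖ M] [SMulCommClass A Aᵐᵒᵖ M] :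
    numIndecSummands (TrivSqZeroExt A M) (TrivSqZeroExt A M) inferInstance =
      numIndecSummands A A inferInstance := by
  let : Module (TrivSqZeroExt A M) (A × M) := Semiring.toModule
  exact (isTensorProd_op_smul A M).numIndecSummands_eq fun _ _ => rfl

theorem summand_count_T_general (A M N MN : Type) [Ring A]
    [AddCommGroup M] [Module A M] [Module Aᵐᵒᵖ M] [SMulCommClass A Aᵐᵒᵖ M]
    [AddCommGroup N] [Module A N]
    [AddCommGroup MN] [Module A MN]
    (t : M → N → MN) (ht : IsTensorProd A M N MN t)
    [instTN : Module (TrivSqZeroExt A M) (N × MN)]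
    (hTN : ∀ (q : TrivSqZeroExt A M) (x : N × MN),
      q • x = (q.fst • x.1, q.fst • x.2 + t q.snd x.1)) :
    numIndecSummands (TrivSqZeroExt A M) (N × MN) instTN =
      numIndecSummands A N inferInstance ∧
    numIndecSummands (TrivSqZeroExt A M) (TrivSqZeroExt A M) inferInstance =
      numIndecSummands A A inferInstance :=
  ⟨ht.numIndecSummands_eq hTN, numIndecSummands_trivSqZeroExt A M⟩

/-- Let `A` be a finite dimensional algebra over a field `K`, `M` a
finite dimensional `A`-bimodule, and `Λ = A ⋉ M` the trivial extension. For any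
finite dimensional `A`-module `N`, the number of pairwise non-isomorphic
indecomposable direct summands of `T(N)` equals that of `N`. In particular, `Λ`
and `A` have the same number of non-isomorphic indecomposable projective modules
(indecomposable direct summands of the regular module). -/
theorem summand_count_T (K A M N MN : Type) [Field K] [Ring A] [Algebra K A]
    [FiniteDimensional K A]
    [AddCommGroup M] [Module A M] [Module Aᵐᵒᵖ M] [SMulCommClass A Aᵐᵒᵖ M]
    [Module K M] [FiniteDimensional K M]
    [AddCommGroup N] [Module A N] [Module K N] [IsScalarTower K A N]
    [FiniteDimensional K N]
    [AddCommGroup MN] [Module A MN] [Module K MN] [FiniteDimensional K MN]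
    (t : M → N → MN) (ht : IsTensorProd A M N MN t)
    [instTN : Module (TrivSqZeroExt A M) (N × MN)]
    (hTN : ∀ (q : TrivSqZeroExt A M) (x : N × MN),
      q • x = (q.fst • x.1, q.fst • x.2 + t q.snd x.1)) :
    numIndecSummands (TrivSqZeroExt A M) (N × MN) instTN =
      numIndecSummands A N inferInstance ∧
    numIndecSummands (TrivSqZeroExt A M) (TrivSqZeroExt A M) inferInstance =
      numIndecSummands A A inferInstance :=
  summand_count_T_general A M N MN t ht (instTN := instTN) hTN
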